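/- For every integer s ≥ 2 there exists a unique real number ρ ∈ (2,∞) such that L(ρ,s) = 0; moreover L(r,s) < 0 for all real r with 2 < r < ρ, and L(r,s) > 0 for all real r > ρ. -/

import Mathlib

noncomputable section

/-- `L(r,s) = ln(r−1) + ln(s−1) + ((s−1)(rs−r−s)/s)·ln(1 − s/(rs−r))`. -/
def Lfun (r s : ℝ) : ℝ :=
  Real.log (r - 1) + Real.log (s - 1) +
    ((s - 1) * (r * s - r - s) / s) * Real.log (1 - s / (r * s - r))

end

/-!
The substitution `m = (r - 1)(s - 1) - 1` maps `r > 2` onto `m > s - 2` and turns `L(r, s)` into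
`Lreduced s m = log (1 + m) - ((s - 1) / s) m (log (m + s) - log m)`. Its derivative is positive
at each of its zeros: when `s (s - 1) (1 + m) ≤ 2 m (m + s)` this follows from
`2 log t < t - 1/t` at `t = 1 + s/m`; otherwise the zero itself rewrites the logarithmic term of
the derivative as `log (1 + m) / m`, which is less than `1 / √(1 + m)`. A continuous function
whose zeros all have positive derivative crosses `0` at most once, and only upwards, so it remains
to exhibit one negative and one positive value of `Lreduced s`.
-/

open Real Set Filter Topology

theorem two_mul_log_lt_sub_inv {x : ℝ} (hx : 1 < x) : 2 * log x < x - x⁻¹ := by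
  have h := self_lt_sinh_iff.mpr (log_pos hx)
  rw [sinh_log (by linarith)] at h
  linarith

theorem two_div_le_log_one_add_inv {a : ℝ} (ha : 0 < a) :
    2 / (2 * a + 1) ≤ log (1 + a⁻¹) := by
  simpa [div_eq_mul_inv] using le_hasSum (hasSum_log_one_add_inv ha) 0 fun k _ => by positivity

theorem log_one_add_div_lt_inv_sqrt {m : ℝ} (hm : 0 < m) :
    log (1 + m) / m < (√(1 + m))⁻¹ := by
  set v := √(1 + m)
  have hv2 : v ^ 2 = 1 + m := sq_sqrt (by linarith)
  have hv : 1 < v := by rw [← sqrt_one]; exact sqrt_lt_sqrt zero_le_one (by linarith)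
  have h := two_mul_log_lt_sub_inv hv
  have hsub : v - v⁻¹ = v⁻¹ * m := by
    rw [show m = v ^ 2 - 1 by linarith]
    field_simp
  rw [div_lt_iff₀ hm, ← hv2, log_pow]
  push_cast
  linarith

section SignChange

variable {f : ℝ → ℝ} {a x : ℝ}

theorem eventually_pos_nhdsGT_of_deriv_pos (hd : 0 < deriv f x) (hx : f x = 0) :
    ∀ᶠ u in 𝓝[>] x, 0 < f u := by
  filter_upwards [self_mem_nhdsWithin,
    nhdsWithin_le_nhds (eventually_nhdsWithin_sign_eq_of_deriv_pos hd hx)] with u hu h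
  rwa [sign_pos (sub_pos.mpr hu), sign_eq_one_iff] at h

theorem eventually_neg_nhdsLT_of_deriv_pos (hd : 0 < deriv f x) (hx : f x = 0) :
    ∀ᶠ u in 𝓝[<] x, f u < 0 := by
  filter_upwards [self_mem_nhdsWithin,
    nhdsWithin_le_nhds (eventually_nhdsWithin_sign_eq_of_deriv_pos hd hx)] with u hu h
  rwa [sign_neg (sub_neg.mpr hu), sign_eq_neg_one_iff] at h

theorem pos_of_nonneg_of_deriv_pos_at_zeros (hf : ContinuousOn f (Ioi a))
    (hzero : ∀ t ∈ Ioi a, f t = 0 → 0 < deriv f t) {y : ℝ} (hax : a < x) (hxy : x < y)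
    (hfx : 0 ≤ f x) : 0 < f y := by
  have hcont : ∀ t, x ≤ t → ContinuousAt f t := fun t ht =>
    hf.continuousAt (Ioi_mem_nhds (hax.trans_le ht))
  have hnonneg : Icc x y ⊆ {t | 0 ≤ f t} := by
    refine IsClosed.Icc_subset_of_forall_mem_nhdsWithin ?_ hfx ?_
    · rw [inter_comm]
      exact ContinuousOn.preimage_isClosed_of_isClosed
        (fun t ht => (hcont t ht.1).continuousWithinAt) isClosed_Icc isClosed_Ici
    · rintro t ⟨ht : 0 ≤ f t, htx, -⟩
      rcases ht.eq_or_lt with ht | ht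
      · exact (eventually_pos_nhdsGT_of_deriv_pos (hzero t (hax.trans_le htx) ht.symm)
          ht.symm).mono fun u hu => hu.le
      · exact ((hcont t htx).eventually (lt_mem_nhds ht)).filter_mono nhdsWithin_le_nhds
          |>.mono fun u hu => hu.le
  by_contra hy
  have hy0 : f y = 0 := le_antisymm (not_lt.mp hy) (hnonneg (right_mem_Icc.mpr hxy.le))
  obtain ⟨u, hu, hxu⟩ := ((eventually_neg_nhdsLT_of_deriv_pos
    (hzero y (hax.trans hxy) hy0) hy0).and (Ioo_mem_nhdsLT hxy)).exists
  exact (hnonneg (Ioo_subset_Icc_self hxu)).not_gt hu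

theorem exists_unique_zero_of_deriv_pos_at_zeros (hf : ContinuousOn f (Ioi a))
    (hzero : ∀ t ∈ Ioi a, f t = 0 → 0 < deriv f t) {y : ℝ} (hax : a < x) (hfx : f x < 0)
    (hay : a < y) (hfy : 0 < f y) :
    ∃ ρ, a < ρ ∧ f ρ = 0 ∧ (∀ t, a < t → f t = 0 → t = ρ) ∧
      (∀ t, a < t → t < ρ → f t < 0) ∧ (∀ t, ρ < t → 0 < f t) := by
  have hxy : x < y := by
    by_contra! hyx
    rcases hyx.eq_or_lt with rfl | hyx
    · exact lt_asymm hfx hfy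
    · exact lt_asymm hfx (pos_of_nonneg_of_deriv_pos_at_zeros hf hzero hay hyx hfy.le)
  obtain ⟨ρ, ⟨hxρ, -⟩, hρ⟩ := intermediate_value_Icc hxy.le
    (hf.mono fun t ht => hax.trans_le ht.1) ⟨hfx.le, hfy.le⟩
  have hpos : ∀ t, ρ < t → 0 < f t := fun t ht =>
    pos_of_nonneg_of_deriv_pos_at_zeros hf hzero (hax.trans_le hxρ) ht hρ.ge
  have hneg : ∀ t, a < t → t < ρ → f t < 0 := fun t hat htρ => not_le.mp fun ht =>
    (pos_of_nonneg_of_deriv_pos_at_zeros hf hzero hat htρ ht).ne' hρ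
  refine ⟨ρ, hax.trans_le hxρ, hρ, fun t hat ht => ?_, hneg, hpos⟩
  rcases lt_trichotomy t ρ with htρ | htρ | htρ
  · exact absurd ht (hneg t hat htρ).ne
  · exact htρ
  · exact absurd ht (hpos t htρ).ne'

end SignChange

noncomputable def Lreduced (σ m : ℝ) : ℝ :=
  log (1 + m) - (σ - 1) / σ * m * (log (m + σ) - log m)

noncomputable def LreducedDeriv (σ m : ℝ) : ℝ :=
  1 / (1 + m) + (σ - 1) / (m + σ) - (σ - 1) / σ * (log (m + σ) - log m)

section Lreduced

variable {σ m : ℝ}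

theorem hasDerivAt_Lreduced (hσ : 0 < σ) (hm : 0 < m) :
    HasDerivAt (Lreduced σ) (LreducedDeriv σ m) m := by
  have h1 : HasDerivAt (fun y => log (1 + y)) (1 / (1 + m)) m := by
    simpa using ((hasDerivAt_id m).const_add 1).log (by positivity)
  have h2 : HasDerivAt (fun y => log (y + σ)) (1 / (m + σ)) m := by
    simpa using ((hasDerivAt_id m).add_const σ).log (by positivity)
  have h3 : HasDerivAt (fun y => (σ - 1) / σ * y) ((σ - 1) / σ) m := by
    simpa using (hasDerivAt_id m).const_mul ((σ - 1) / σ)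
  have h4 : HasDerivAt (fun y => log (y + σ) - log y) (1 / (m + σ) - m⁻¹) m :=
    h2.sub (hasDerivAt_log hm.ne')
  refine (h1.sub (h3.mul h4)).congr_deriv ?_
  unfold LreducedDeriv
  field_simp
  ring

theorem LreducedDeriv_pos_of_le (hσ : 1 < σ) (hm : 0 < m)
    (hlarge : σ * (σ - 1) * (1 + m) ≤ 2 * m * (m + σ)) : 0 < LreducedDeriv σ m := by
  have hσ0 : 0 < σ := by linarith
  have hlog : log (m + σ) - log m < σ * (2 * m + σ) / (2 * m * (m + σ)) := by
    have h := two_mul_log_lt_sub_inv (x := (m + σ) / m) (by rw [lt_div_iff₀ hm]; linarith)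
    rw [log_div (by positivity) hm.ne'] at h
    have e : (m + σ) / m - ((m + σ) / m)⁻¹ = 2 * (σ * (2 * m + σ) / (2 * m * (m + σ))) := by
      field_simp
      ring
    linarith
  have hbound : (σ - 1) / σ * (σ * (2 * m + σ) / (2 * m * (m + σ)))
      ≤ 1 / (1 + m) + (σ - 1) / (m + σ) := by
    rw [show (σ - 1) / σ * (σ * (2 * m + σ) / (2 * m * (m + σ)))
        = (σ - 1) * (2 * m + σ) / (2 * m * (m + σ)) by field_simp,
      div_add_div _ _ (by positivity) (by positivity),
      div_le_div_iff₀ (by positivity) (by positivity)]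
    nlinarith
  have := mul_lt_mul_of_pos_left hlog (div_pos (sub_pos.mpr hσ) (by positivity))
  unfold LreducedDeriv
  linarith

theorem inv_sqrt_one_add_le_of_lt (hσ : 2 ≤ σ) (hm : 0 < m)
    (hsmall : 2 * m * (m + σ) < σ * (σ - 1) * (1 + m)) :
    (√(1 + m))⁻¹ ≤ 1 / (1 + m) + (σ - 1) / (m + σ) := by
  set v := √(1 + m)
  have hv2 : v ^ 2 = 1 + m := sq_sqrt (by linarith)
  have hv : 1 < v := by rw [← sqrt_one]; exact sqrt_lt_sqrt zero_le_one (by linarith)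
  have key : (m + σ) * (v - 1) ≤ (σ - 1) * (1 + m) := by
    rw [show m = v ^ 2 - 1 by linarith] at hsmall ⊢
    -- `(σ - 1) v² - (v² - 1 + σ) (v - 1) = (σ - 1 - v) (v² - v + 1) + v`
    rcases le_or_gt v (σ - 1) with h | h
    · nlinarith [mul_nonneg (sub_nonneg.mpr h) (by nlinarith : (0:ℝ) ≤ v ^ 2 - v + 1)]
    · nlinarith [mul_nonneg (sub_pos.mpr h).le (sub_pos.mpr hv).le]
  rw [div_add_div _ _ (by positivity) (by positivity), inv_eq_one_div,
    div_le_div_iff₀ (by positivity) (by positivity)]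
  nlinarith [mul_nonneg (by positivity : (0:ℝ) ≤ v) (sub_nonneg.mpr key)]

theorem LreducedDeriv_pos_of_eq_zero (hσ : 2 ≤ σ) (hm : 0 < m) (hzero : Lreduced σ m = 0) :
    0 < LreducedDeriv σ m := by
  rcases le_or_gt (σ * (σ - 1) * (1 + m)) (2 * m * (m + σ)) with hlarge | hsmall
  · exact LreducedDeriv_pos_of_le (by linarith) hm hlarge
  · have hlog : (σ - 1) / σ * (log (m + σ) - log m) = log (1 + m) / m := by
      rw [eq_div_iff hm.ne']
      unfold Lreduced at hzero
      linarith
    have := log_one_add_div_lt_inv_sqrt hm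
    have := inv_sqrt_one_add_le_of_lt hσ hm hsmall
    unfold LreducedDeriv
    linarith

theorem Lreduced_exp_pos (hσ : 1 < σ) : 0 < Lreduced σ (exp (σ - 1)) := by
  set M := exp (σ - 1)
  have hM : 0 < M := exp_pos _
  have hσ0 : 0 < σ := by linarith
  have hlog : log (M + σ) - log M < σ / M := by
    rw [← log_div (by positivity) hM.ne']
    calc log ((M + σ) / M) < (M + σ) / M - 1 :=
          log_lt_sub_one_of_pos (by positivity) (by rw [ne_eq, div_eq_one_iff_eq hM.ne']; linarith)
      _ = σ / M := by field_simp; ring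
  have h1 := mul_lt_mul_of_pos_left hlog (mul_pos (div_pos (sub_pos.mpr hσ) hσ0) hM)
  have h2 : σ - 1 < log (1 + M) := by
    simpa [M] using log_lt_log hM (lt_one_add M)
  have h3 : (σ - 1) / σ * M * (σ / M) = σ - 1 := by field_simp
  unfold Lreduced
  linarith

theorem Lreduced_two_quarter_neg : Lreduced 2 (1 / 4) < 0 := by
  have h : 8 * log (5 / 4) < log 9 := by
    have := log_lt_log (by positivity) (show (5 / 4 : ℝ) ^ 8 < 9 by norm_num)
    rwa [log_pow, Nat.cast_ofNat] at this
  have e : log (1 / 4 + 2) - log (1 / 4) = log 9 := by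
    rw [← log_div (by norm_num) (by norm_num)]; norm_num
  unfold Lreduced
  rw [e]
  norm_num
  linarith

theorem Lreduced_sub_one_neg (hσ : 3 ≤ σ) : Lreduced σ (σ - 1) < 0 := by
  have hσ1 : 0 < σ - 1 := by linarith
  have h32 : 0 < 3 * σ - 2 := by linarith
  have hratio : 2 * σ / (3 * σ - 2) ≤ log (σ - 1 + σ) - log (σ - 1) := by
    have h := two_div_le_log_one_add_inv (a := (σ - 1) / σ) (by positivity)
    rw [show 1 + ((σ - 1) / σ)⁻¹ = (σ - 1 + σ) / (σ - 1) by field_simp,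
      log_div (by linarith) (by linarith),
      show 2 * ((σ - 1) / σ) + 1 = (3 * σ - 2) / σ by field_simp; ring, div_div_eq_mul_div] at h
    exact h
  have hlogσ : log σ ≤ 2 * log 2 + σ / 4 - 1 := by
    have h := log_le_sub_one_of_pos (x := σ / 4) (by positivity)
    rw [log_div (by positivity) (by norm_num), show (4 : ℝ) = 2 ^ 2 by norm_num, log_pow] at h
    push_cast at h
    linarith
  have hlog2 := log_two_lt_d9
  have hcoef : 2 * (σ - 1) ^ 2 / (3 * σ - 2)
      ≤ (σ - 1) / σ * (σ - 1) * (log (σ - 1 + σ) - log (σ - 1)) := by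
    calc 2 * (σ - 1) ^ 2 / (3 * σ - 2) = (σ - 1) / σ * (σ - 1) * (2 * σ / (3 * σ - 2)) := by
          field_simp
      _ ≤ _ := mul_le_mul_of_nonneg_left hratio
          (mul_nonneg (div_nonneg hσ1.le (by linarith)) hσ1.le)
  have hfinal : 2 * log 2 + σ / 4 - 1 < 2 * (σ - 1) ^ 2 / (3 * σ - 2) := by
    rw [lt_div_iff₀ (by linarith)]
    nlinarith
  unfold Lreduced
  rw [show 1 + (σ - 1) = σ by ring]
  linarith

end Lreduced

section Substitution

variable {r σ : ℝ}

theorem Lfun_eq_Lreduced (hσ : 1 < σ) (hr : σ < r * (σ - 1)) :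
    Lfun r σ = Lreduced σ ((r - 1) * (σ - 1) - 1) := by
  have hr1 : 0 < r - 1 := by nlinarith
  have hm : 0 < (r - 1) * (σ - 1) - 1 := by linarith
  have e1 : log (r - 1) + log (σ - 1) = log (1 + ((r - 1) * (σ - 1) - 1)) := by
    rw [← log_mul hr1.ne' (by linarith)]
    ring_nf
  have e2 : log (1 - σ / (r * σ - r)) =
      log ((r - 1) * (σ - 1) - 1) - log ((r - 1) * (σ - 1) - 1 + σ) := by
    rw [← log_div hm.ne' (by linarith), show r * σ - r = (r - 1) * (σ - 1) - 1 + σ by ring,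
      one_sub_div (by linarith), add_sub_cancel_right]
  unfold Lfun Lreduced
  rw [e2, e1]
  ring

theorem hasDerivAt_Lfun (hσ : 1 < σ) (hr : σ < r * (σ - 1)) :
    HasDerivAt (Lfun · σ) ((σ - 1) * LreducedDeriv σ ((r - 1) * (σ - 1) - 1)) r := by
  have hsub : HasDerivAt (fun r => (r - 1) * (σ - 1) - 1) (σ - 1) r := by
    simpa using (((hasDerivAt_id r).sub_const 1).mul_const (σ - 1)).sub_const 1
  have hm : 0 < (r - 1) * (σ - 1) - 1 := by nlinarith
  have hLred := (hasDerivAt_Lreduced (by linarith : (0 : ℝ) < σ) hm).comp r hsub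
  rw [mul_comm]
  refine hLred.congr_of_eventuallyEq ?_
  filter_upwards [(isOpen_lt continuous_const (continuous_id.mul_const _)).mem_nhds hr] with u hu
  exact Lfun_eq_Lreduced hσ hu

theorem exists_Lfun_eq_Lreduced (hσ : 2 ≤ σ) {m : ℝ} (hm : σ - 2 < m) :
    ∃ r, 2 < r ∧ Lfun r σ = Lreduced σ m := by
  have hσ1 : 0 < σ - 1 := by linarith
  have hr : ((m + 1) / (σ - 1) + 1 - 1) * (σ - 1) - 1 = m := by field_simp; ring
  refine ⟨(m + 1) / (σ - 1) + 1, ?_, ?_⟩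
  · rw [← sub_pos,
      show (m + 1) / (σ - 1) + 1 - 2 = (m - (σ - 2)) / (σ - 1) by field_simp; ring]
    exact div_pos (by linarith) hσ1
  · rw [Lfun_eq_Lreduced (by linarith) (by nlinarith), hr]

end Substitution

theorem exists_Lreduced_neg_of_int {s : ℤ} (hs : 2 ≤ s) :
    ∃ m, (s : ℝ) - 2 < m ∧ Lreduced s m < 0 := by
  rcases hs.eq_or_lt with rfl | hs
  · exact ⟨1 / 4, by norm_num, by exact_mod_cast Lreduced_two_quarter_neg⟩
  · exact ⟨s - 1, by linarith, Lreduced_sub_one_neg (by exact_mod_cast hs)⟩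

theorem stmt_7 (s : ℤ) (hs : 2 ≤ s) :
    ∃ ρ : ℝ, 2 < ρ ∧ Lfun ρ (s : ℝ) = 0 ∧
      (∀ x : ℝ, 2 < x → Lfun x (s : ℝ) = 0 → x = ρ) ∧
      (∀ x : ℝ, 2 < x → x < ρ → Lfun x (s : ℝ) < 0) ∧
      (∀ x : ℝ, ρ < x → 0 < Lfun x (s : ℝ)) := by
  have hσ : (2 : ℝ) ≤ s := by exact_mod_cast hs
  have hrσ : ∀ r : ℝ, 2 < r → (s : ℝ) < r * (s - 1) := fun r hr => by nlinarith
  have hderiv : ∀ r : ℝ, 2 < r → HasDerivAt (Lfun · s) _ r := fun r hr =>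
    hasDerivAt_Lfun (by linarith) (hrσ r hr)
  obtain ⟨m, hm, hneg⟩ := exists_Lreduced_neg_of_int hs
  obtain ⟨x, hx, hLx⟩ := exists_Lfun_eq_Lreduced hσ hm
  obtain ⟨y, hy, hLy⟩ := exists_Lfun_eq_Lreduced hσ
    (show (s : ℝ) - 2 < exp (s - 1) by linarith [add_one_le_exp ((s : ℝ) - 1)])
  refine exists_unique_zero_of_deriv_pos_at_zeros
    (fun r hr => (hderiv r hr).continuousAt.continuousWithinAt) (fun r hr hzero => ?_)
    hx (hLx ▸ hneg) hy (hLy ▸ Lreduced_exp_pos (by linarith))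
  rw [(hderiv r hr).deriv]
  refine mul_pos (by linarith) (LreducedDeriv_pos_of_eq_zero hσ (by nlinarith [hrσ r hr]) ?_)
  rwa [← Lfun_eq_Lreduced (by linarith) (hrσ r hr)]
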